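/- arXiv:1612.04980 — 4 statements merged into one kernel-verified Lean document; each statement's English description precedes it below -/
import Mathlib

section
/- For every n ≥ 1, the digraph D_n admits a valid DAG-depth decomposition (P, org) of depth n (hence optimal, since ddp(D_n) = n) such that |V(P)| = 2^{n+1} − 2; in particular, there is a digraph on 2n vertices having a valid optimal DAG-depth decomposition of exponential size. -/
open scoped Classical

noncomputable section

/-- A finite directed graph: a finite vertex set together with an adjacency
relation whose edges join vertices of the graph. -/
structure FinDigraph (α : Type) where
  verts : Finset α
  Adj : α → α → Prop
  adj_mem : ∀ u v, Adj u v → u ∈ verts ∧ v ∈ verts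

namespace FinDigraph

variable {α β : Type}

/-- The out-neighbourhood `N⁺_D(v)`. -/
def outNbhd (D : FinDigraph α) (v : α) : Set α := {u | D.Adj v u}

/-- The set of vertices reachable from `s` by a (possibly trivial) directed path. -/
def reachSet (D : FinDigraph α) (s : α) : Finset α :=
  D.verts.filter fun v => Relation.ReflTransGen D.Adj s v

/-- A reachable fragment: an inclusion-maximal set among the reachable sets. -/
def IsFragment (D : FinDigraph α) (R : Finset α) : Prop :=
  (∃ s ∈ D.verts, R = D.reachSet s) ∧
  ∀ s ∈ D.verts, R ⊆ D.reachSet s → R = D.reachSet s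

/-- The collection of all reachable fragments of `D`. -/
def fragments (D : FinDigraph α) : Finset (Finset α) :=
  D.verts.powerset.filter fun R => D.IsFragment R

/-- The induced subdigraph `D[S]`. -/
def induce (D : FinDigraph α) (S : Finset α) : FinDigraph α where
  verts := D.verts ∩ S
  Adj u v := D.Adj u v ∧ u ∈ S ∧ v ∈ S
  adj_mem := fun u v h => ⟨Finset.mem_inter.mpr ⟨(D.adj_mem u v h.1).1, h.2.1⟩,
    Finset.mem_inter.mpr ⟨(D.adj_mem u v h.1).2, h.2.2⟩⟩

/-- Deletion of a vertex: `D − v = D[V(D) ∖ {v}]`. -/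
def deleteVert (D : FinDigraph α) (v : α) : FinDigraph α :=
  D.induce (D.verts.erase v)

/-- Fuel-based helper for DAG-depth; the fuel `|V(D)|` always suffices since each
recursive call strictly decreases the number of vertices. -/
def ddpAux : ℕ → FinDigraph α → ℕ
  | 0, _ => 0
  | n+1, D =>
    if hcard : D.verts.card ≤ 1 then 1
    else if D.fragments.card = 1 then
      1 + D.verts.inf' (Finset.card_pos.mp (by omega)) fun v => ddpAux n (D.deleteVert v)
    else
      D.fragments.sup fun R => ddpAux n (D.induce R)

/-- The DAG-depth of a digraph. -/
def ddp (D : FinDigraph α) : ℕ := ddpAux D.verts.card D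

/-- A DAG: a (finite) digraph with no directed cycles. -/
def IsDag (P : FinDigraph α) : Prop := ∀ v, ¬ Relation.TransGen P.Adj v v

/-- A root of a DAG: a vertex of indegree zero. -/
def IsRoot (P : FinDigraph α) (r : α) : Prop := r ∈ P.verts ∧ ∀ u, ¬ P.Adj u r

/-- `y` is a descendant of `x`: there is a (possibly trivial) directed path from `x` to `y`. -/
def Desc (P : FinDigraph α) (x y : α) : Prop := Relation.ReflTransGen P.Adj x y

/-- `l` is a directed path in `P` starting at a root of `P` and ending at `v`. -/
def IsRootPath (P : FinDigraph α) (l : List α) (v : α) : Prop :=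
  l ≠ [] ∧ l.Chain' P.Adj ∧ (∀ x ∈ l, x ∈ P.verts) ∧
  (∃ r, l.head? = some r ∧ P.IsRoot r) ∧ l.getLast? = some v

/-- The depth of a DAG: the maximum number of vertices on a directed path. -/
def depth (P : FinDigraph α) : ℕ :=
  sSup {n : ℕ | ∃ l : List α, l.Chain' P.Adj ∧ (∀ x ∈ l, x ∈ P.verts) ∧ l.length = n}

/-- The Neighbor cover condition for a DAG-depth decomposition `(P, org)` of `D`. -/
def NeighborCover (D : FinDigraph α) (P : FinDigraph β) (org : β → α) : Prop :=
  ∀ v' ∈ P.verts, ∀ u, D.Adj (org v') u →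
    (∃ u' ∈ P.verts, org u' = u ∧ P.Desc v' u') ∨
    (∀ l, P.IsRootPath l v' → ∃ u' ∈ l, org u' = u)

/-- `(P, org)` is a valid DAG-depth decomposition of `D`: `P` is a DAG, `org` maps
`V(P)` onto `V(D)`, and the Neighbor cover condition holds. -/
def IsValidDecomp (D : FinDigraph α) (P : FinDigraph β) (org : β → α) : Prop :=
  P.IsDag ∧ (∀ v' ∈ P.verts, org v' ∈ D.verts) ∧
  (∀ v ∈ D.verts, ∃ v' ∈ P.verts, org v' = v) ∧
  NeighborCover D P org

end FinDigraph

namespace FinDigraph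

/-- The digraph `Dn n` with vertices `a_1, …, a_n, b_1, …, b_n`, where `a_i = (i, false)`
and `b_i = (i, true)`, and edges `(x_i, y_j)` for all `1 ≤ i < j ≤ n` and all choices
`x, y ∈ {a, b}`. -/
def Dn (n : ℕ) : FinDigraph (ℕ × Bool) where
  verts := Finset.Icc 1 n ×ˢ Finset.univ
  Adj u v := 1 ≤ u.1 ∧ u.1 < v.1 ∧ v.1 ≤ n
  adj_mem := by
    intro u v h
    simp only [Finset.mem_product, Finset.mem_Icc, Finset.mem_univ, and_true]
    omega

end FinDigraph

/-!
In `Dn n` every vertex points to every vertex on a strictly higher level. For any digraph of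
this shape the DAG-depth is the number of levels: if the lowest level is a single vertex,
everything is reachable from it, and deleting it removes exactly one level while deleting any
vertex removes at most one; otherwise each reachable fragment consists of one lowest vertex
together with all higher levels, so it still meets every level.

The decomposition unfolds `Dn n` into two complete binary trees rooted at copies of `a₁` and
`b₁`, the children of a copy of `x_k` being copies of `a_{k+1}` and `b_{k+1}`. Below every
vertex on level `k` there are then copies of all vertices on higher levels, so the neighbor cover
condition already holds through descendants, while the depth is `n` and the size is
`2 (2ⁿ - 1)`.
-/

theorem List.length_le_card_of_isChain {α β : Type*} [Preorder β] {R : α → α → Prop}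
    {g : α → β} {s : Finset β} {l : List α} (hR : ∀ a b, R a b → g a < g b)
    (hl : l.IsChain R) (hs : ∀ x ∈ l, g x ∈ s) : l.length ≤ s.card := by
  have hnodup : (l.map g).Nodup :=
    (((List.isChain_map g).2 (hl.imp hR)).pairwise).imp ne_of_lt
  rw [← List.length_map g, ← List.toFinset_card_of_nodup hnodup]
  exact Finset.card_le_card fun b hb => by
    obtain ⟨x, hx, rfl⟩ := List.mem_map.1 (List.mem_toFinset.1 hb)
    exact hs x hx

theorem Nat.log_eq_add_of_div_pow_eq {b m u d : ℕ} (hb : 1 < b) (hm : m ≠ 0)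
    (h : u / b ^ d = m) : Nat.log b u = Nat.log b m + d := by
  have hu : b ^ d ≤ u := by
    by_contra hlt
    exact hm (h ▸ Nat.div_eq_of_lt (not_le.1 hlt))
  have hd : d ≤ Nat.log b u := Nat.le_log_of_pow_le hb hu
  rw [← h, Nat.log_div_base_pow]
  omega

namespace FinDigraph

variable {α β : Type}

@[ext]
theorem ext {D E : FinDigraph α} (hV : D.verts = E.verts) (hA : D.Adj = E.Adj) : D = E := by
  cases D; cases E; cases hV; cases hA; rfl

theorem mem_reachSet_self {D : FinDigraph α} {s : α} (hs : s ∈ D.verts) : s ∈ D.reachSet s :=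
  Finset.mem_filter.2 ⟨hs, Relation.ReflTransGen.refl⟩

theorem isDag_of_adj_lt [Preorder β] (P : FinDigraph α) (g : α → β)
    (h : ∀ u v, P.Adj u v → g u < g v) : P.IsDag := by
  intro v hv
  have hlt := hv.lift g h
  rw [Relation.transGen_eq_self] at hlt
  exact lt_irrefl _ hlt

theorem depth_eq_of_isChain {P : FinDigraph α} {k : ℕ}
    (hle : ∀ l : List α, l.IsChain P.Adj → (∀ x ∈ l, x ∈ P.verts) → l.length ≤ k)
    (l₀ : List α) (hl₀ : l₀.IsChain P.Adj) (hmem : ∀ x ∈ l₀, x ∈ P.verts)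
    (hlen : l₀.length = k) : P.depth = k :=
  IsGreatest.csSup_eq
    ⟨⟨l₀, hl₀, hmem, hlen⟩, by rintro _ ⟨l, hl, hm, rfl⟩; exact hle l hl hm⟩

section LevelDigraph

variable [LinearOrder β] (f : α → β)

def levelDigraph (V : Finset α) : FinDigraph α where
  verts := V
  Adj u v := u ∈ V ∧ v ∈ V ∧ f u < f v
  adj_mem _ _ h := ⟨h.1, h.2.1⟩

def bottomLevel (V : Finset α) : Finset α := V.filter fun s => ∀ t ∈ V, f s ≤ f t

variable {f} {V : Finset α}

theorem induce_levelDigraph (S : Finset α) :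
    (levelDigraph f V).induce S = levelDigraph f (V ∩ S) := by
  ext
  · rfl
  · simp only [induce, levelDigraph, Finset.mem_inter]
    tauto

theorem deleteVert_levelDigraph (v : α) :
    (levelDigraph f V).deleteVert v = levelDigraph f (V.erase v) := by
  rw [deleteVert, induce_levelDigraph]
  exact congrArg _ (Finset.inter_eq_right.2 (Finset.erase_subset v V))

theorem reachSet_levelDigraph {s : α} (hs : s ∈ V) :
    (levelDigraph f V).reachSet s = V.filter fun v => v = s ∨ f s < f v := by
  have htrans : IsTrans α (levelDigraph f V).Adj :=
    ⟨fun _ _ _ h₁ h₂ => ⟨h₁.1, h₂.2.1, h₁.2.2.trans h₂.2.2⟩⟩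
  ext v
  simp only [reachSet, Finset.mem_filter, Relation.reflTransGen_iff_eq_or_transGen,
    Relation.transGen_eq_self]
  exact and_congr_right fun hv => or_congr_right ⟨fun h => h.2.2, fun h => ⟨hs, hv, h⟩⟩

theorem mem_bottomLevel {s : α} : s ∈ bottomLevel f V ↔ s ∈ V ∧ ∀ t ∈ V, f s ≤ f t :=
  Finset.mem_filter

theorem bottomLevel_nonempty (hV : V.Nonempty) : (bottomLevel f V).Nonempty := by
  obtain ⟨s, hs, hmin⟩ := V.exists_min_image f hV
  exact ⟨s, mem_bottomLevel.2 ⟨hs, hmin⟩⟩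

theorem eq_of_mem_reachSet_levelDigraph {s t : α} (hs : s ∈ bottomLevel f V) (ht : t ∈ V)
    (h : s ∈ (levelDigraph f V).reachSet t) : s = t := by
  rw [reachSet_levelDigraph ht, Finset.mem_filter] at h
  exact h.2.resolve_right (not_lt.2 ((mem_bottomLevel.1 hs).2 t ht))

theorem fragments_levelDigraph :
    (levelDigraph f V).fragments = (bottomLevel f V).image (levelDigraph f V).reachSet := by
  ext R
  rw [fragments, Finset.mem_filter, Finset.mem_powerset, IsFragment, Finset.mem_image]
  constructor
  · rintro ⟨-, ⟨s, hs : s ∈ V, rfl⟩, hmax⟩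
    by_cases hsb : s ∈ bottomLevel f V
    · exact ⟨s, hsb, rfl⟩
    obtain ⟨s₀, hs₀⟩ := bottomLevel_nonempty (f := f) ⟨s, hs⟩
    obtain ⟨t, ht, hts⟩ : ∃ t ∈ V, f t < f s := by simpa [mem_bottomLevel, hs] using hsb
    have hlt : f s₀ < f s := ((mem_bottomLevel.1 hs₀).2 t ht).trans_lt hts
    refine ⟨s₀, hs₀, (hmax s₀ (mem_bottomLevel.1 hs₀).1 fun v hv => ?_).symm⟩
    rw [reachSet_levelDigraph hs, Finset.mem_filter] at hv
    rw [reachSet_levelDigraph (mem_bottomLevel.1 hs₀).1, Finset.mem_filter]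
    rcases hv with ⟨hv, rfl | hsv⟩
    · exact ⟨hv, Or.inr hlt⟩
    · exact ⟨hv, Or.inr (hlt.trans hsv)⟩
  · rintro ⟨s, hs, rfl⟩
    have hsV := (mem_bottomLevel.1 hs).1
    refine ⟨Finset.filter_subset _ _, ⟨s, hsV, rfl⟩, fun t ht hst => ?_⟩
    rw [eq_of_mem_reachSet_levelDigraph hs ht (hst (mem_reachSet_self hsV))]

theorem image_reachSet_levelDigraph {s : α} (hs : s ∈ bottomLevel f V) :
    ((levelDigraph f V).reachSet s).image f = V.image f := by
  obtain ⟨hsV, hmin⟩ := mem_bottomLevel.1 hs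
  refine Finset.Subset.antisymm (Finset.image_subset_image (Finset.filter_subset _ _)) ?_
  simp only [Finset.subset_iff, Finset.mem_image, reachSet_levelDigraph hsV, Finset.mem_filter]
  rintro _ ⟨v, hv, rfl⟩
  rcases (hmin v hv).lt_or_eq with hlt | heq
  · exact ⟨v, ⟨hv, Or.inr hlt⟩, rfl⟩
  · exact ⟨s, ⟨hsV, Or.inl rfl⟩, heq⟩

theorem card_fragments_levelDigraph :
    (levelDigraph f V).fragments.card = (bottomLevel f V).card := by
  rw [fragments_levelDigraph]
  refine Finset.card_image_of_injOn fun s hs t ht hst => ?_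
  exact eq_of_mem_reachSet_levelDigraph hs (mem_bottomLevel.1 ht).1
    (hst ▸ mem_reachSet_self (mem_bottomLevel.1 hs).1)

theorem card_image_le_card_image_erase_add_one {v : α} (hv : v ∈ V) :
    (V.image f).card ≤ ((V.erase v).image f).card + 1 :=
  calc (V.image f).card = (insert (f v) ((V.erase v).image f)).card := by
        rw [← Finset.image_insert, Finset.insert_erase hv]
    _ ≤ _ := Finset.card_insert_le _ _

theorem card_image_erase_of_bottomLevel_eq_singleton {s : α} (h : bottomLevel f V = {s}) :
    ((V.erase s).image f).card + 1 = (V.image f).card := by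
  have hs : s ∈ bottomLevel f V := h ▸ Finset.mem_singleton_self s
  have himage : (V.erase s).image f = (V.image f).erase (f s) := by
    ext x
    simp only [Finset.mem_image, Finset.mem_erase]
    constructor
    · rintro ⟨v, ⟨hvs, hv⟩, rfl⟩
      refine ⟨fun hfv => hvs ?_, v, hv, rfl⟩
      rw [← Finset.mem_singleton, ← h, mem_bottomLevel, hfv]
      exact ⟨hv, (mem_bottomLevel.1 hs).2⟩
    · rintro ⟨hx, v, hv, rfl⟩
      exact ⟨v, ⟨fun hvs => hx (hvs ▸ rfl), hv⟩, rfl⟩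
  rw [himage, Finset.card_erase_add_one (Finset.mem_image_of_mem f (mem_bottomLevel.1 hs).1)]

theorem one_add_inf'_card_image_erase {s : α} (hbot : bottomLevel f V = {s}) (hV : V.Nonempty) :
    1 + V.inf' hV (fun v => ((V.erase v).image f).card) = (V.image f).card := by
  have hsV : s ∈ V := (mem_bottomLevel.1 (hbot ▸ Finset.mem_singleton_self s)).1
  have hs := card_image_erase_of_bottomLevel_eq_singleton hbot
  refine le_antisymm (by have := Finset.inf'_le (fun v => ((V.erase v).image f).card) hsV; omega) ?_
  rw [add_comm, ← Nat.sub_le_iff_le_add]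
  refine Finset.le_inf' _ _ fun v hv => ?_
  have := card_image_le_card_image_erase_add_one (f := f) hv
  omega

theorem reachSet_ssubset_of_one_lt_card_bottomLevel {s : α} (h : 1 < (bottomLevel f V).card)
    (hs : s ∈ bottomLevel f V) : (levelDigraph f V).reachSet s ⊂ V := by
  obtain ⟨t, ht, hts⟩ := Finset.exists_mem_ne h s
  refine (Finset.ssubset_iff_of_subset (Finset.filter_subset _ _)).2
    ⟨t, (mem_bottomLevel.1 ht).1, fun hmem => hts ?_⟩
  exact eq_of_mem_reachSet_levelDigraph ht (mem_bottomLevel.1 hs).1 hmem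

theorem ddpAux_levelDigraph : ∀ (fuel : ℕ) (V : Finset α), V.Nonempty → V.card ≤ fuel →
    ddpAux fuel (levelDigraph f V) = (V.image f).card
  | 0, _, hV, hcard => by have := hV.card_pos; omega
  | fuel + 1, V, hV, hcard => by
    have ih : ∀ W : Finset α, W.Nonempty → W.card < V.card →
        ddpAux fuel (levelDigraph f W) = (W.image f).card :=
      fun W hW hWV => ddpAux_levelDigraph fuel W hW (by omega)
    rw [ddpAux]
    split_ifs with hone hfrag
    · obtain ⟨v, rfl⟩ := Finset.card_eq_one.1 (le_antisymm hone hV.card_pos)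
      simp
    · change ¬V.card ≤ 1 at hone
      rw [card_fragments_levelDigraph, Finset.card_eq_one] at hfrag
      obtain ⟨s, hbot⟩ := hfrag
      rw [← one_add_inf'_card_image_erase hbot hV]
      congr 1
      refine Finset.inf'_congr _ rfl fun v hv => ?_
      rw [deleteVert_levelDigraph]
      exact ih _ (Finset.one_lt_card_iff_nontrivial.1 (by omega)).erase_nonempty
        (Finset.card_erase_lt_of_mem hv)
    · have hbot := bottomLevel_nonempty (f := f) hV
      have hcard : 1 < (bottomLevel f V).card := by
        rw [card_fragments_levelDigraph] at hfrag
        have := hbot.card_pos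
        omega
      rw [fragments_levelDigraph, Finset.sup_image]
      refine (Finset.sup_congr rfl fun s hs => ?_).trans (Finset.sup_const hbot _)
      have hssub := reachSet_ssubset_of_one_lt_card_bottomLevel hcard hs
      rw [Function.comp_apply, induce_levelDigraph, Finset.inter_eq_right.2 hssub.subset,
        ih _ ⟨s, mem_reachSet_self (mem_bottomLevel.1 hs).1⟩ (Finset.card_lt_card hssub),
        image_reachSet_levelDigraph hs]

theorem ddp_levelDigraph (V : Finset α) : ddp (levelDigraph f V) = (V.image f).card := by
  rcases V.eq_empty_or_nonempty with rfl | hV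
  · rfl
  · exact ddpAux_levelDigraph _ V hV le_rfl

end LevelDigraph

theorem mem_verts_Dn {n : ℕ} {v : ℕ × Bool} :
    v ∈ (Dn n).verts ↔ v.1 ∈ Finset.Icc 1 n := by
  simp [Dn]

theorem Dn_eq_levelDigraph (n : ℕ) :
    Dn n = levelDigraph Prod.fst (Finset.Icc 1 n ×ˢ (Finset.univ : Finset Bool)) := by
  ext1
  · rfl
  · funext u v
    simp only [Dn, levelDigraph, Finset.mem_product, Finset.mem_Icc, Finset.mem_univ, and_true,
      eq_iff_iff]
    omega

theorem card_verts_Dn (n : ℕ) : (Dn n).verts.card = 2 * n := by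
  simp [Dn, mul_comm]

theorem ddp_Dn (n : ℕ) : ddp (Dn n) = n := by
  rw [Dn_eq_levelDigraph, ddp_levelDigraph, Finset.product_image_fst Finset.univ_nonempty,
    Nat.card_Icc, Nat.add_sub_cancel]

section HeapForest

/-- Two complete binary trees of depth `n` in heap numbering, rooted at `2` and `3`: the children
of `m` are `2m` and `2m + 1`, so `m` lies on level `log₂ m`. -/
def heapForest (n : ℕ) : FinDigraph ℕ where
  verts := Finset.Ico 2 (2 ^ (n + 1))
  Adj u v := 2 ≤ u ∧ v < 2 ^ (n + 1) ∧ v / 2 = u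
  adj_mem _ _ h := by simp only [Finset.mem_Ico]; omega

/-- The vertex `m` stands for `a_{log₂ m}` if `m` is even and for `b_{log₂ m}` if it is odd. -/
def heapLabel (m : ℕ) : ℕ × Bool := (Nat.log 2 m, m.bodd)

variable {n : ℕ}

theorem mem_heapForest_verts {m : ℕ} :
    m ∈ (heapForest n).verts ↔ Nat.log 2 m ∈ Finset.Icc 1 n := by
  rcases eq_or_ne m 0 with rfl | hm
  · simp [heapForest]
  have h₁ := Nat.le_log_iff_pow_le one_lt_two hm (x := 1)
  rw [pow_one] at h₁
  rw [heapForest, Finset.mem_Ico, Finset.mem_Icc, h₁]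
  exact and_congr_right' ((Nat.log_lt_iff_lt_pow one_lt_two hm).symm.trans Nat.lt_succ_iff)

theorem log_lt_log_of_heapForest_adj {u v : ℕ} (h : (heapForest n).Adj u v) :
    Nat.log 2 u < Nat.log 2 v := by
  obtain ⟨hu, -, rfl⟩ := h
  have := Nat.log_pos one_lt_two (show 2 ≤ v by omega)
  rw [Nat.log_div_base]
  omega

theorem heapForest_desc_of_div_pow_eq {m u d : ℕ} (hm : 2 ≤ m) (hu : u < 2 ^ (n + 1))
    (h : u / 2 ^ d = m) : (heapForest n).Desc m u := by
  induction d generalizing u with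
  | zero =>
    rw [pow_zero, Nat.div_one] at h
    exact h ▸ Relation.ReflTransGen.refl
  | succ d ih =>
    rw [pow_succ', ← Nat.div_div_eq_div_mul] at h
    have hm' : m ≤ u / 2 := h ▸ Nat.div_le_self _ _
    exact (ih (by omega) h).tail ⟨by omega, hu, rfl⟩

theorem exists_heapLabel_eq_of_log_lt {m j : ℕ} (hm : m ≠ 0) (hj : Nat.log 2 m < j) (c : Bool) :
    ∃ u, u / 2 ^ (j - Nat.log 2 m) = m ∧ heapLabel u = (j, c) := by
  obtain ⟨e, he⟩ : ∃ e, j - Nat.log 2 m = e + 1 := ⟨j - Nat.log 2 m - 1, by omega⟩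
  have hdiv : Nat.bit c (2 ^ e * m) / 2 ^ (e + 1) = m := by
    rw [pow_succ', ← Nat.div_div_eq_div_mul, Nat.bit_div_two,
      Nat.mul_div_cancel_left _ (Nat.two_pow_pos e)]
  refine ⟨Nat.bit c (2 ^ e * m), he ▸ hdiv, ?_⟩
  rw [heapLabel, Nat.log_eq_add_of_div_pow_eq one_lt_two hm hdiv, Nat.bodd_bit]
  congr 1
  omega

theorem heapForest_isDag : (heapForest n).IsDag :=
  isDag_of_adj_lt _ (Nat.log 2) fun _ _ => log_lt_log_of_heapForest_adj

theorem depth_heapForest : (heapForest n).depth = n := by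
  refine depth_eq_of_isChain (fun l hl hmem => ?_) ((List.range n).map fun i => 2 ^ (i + 1)) ?_ ?_
    (by simp)
  · simpa using List.length_le_card_of_isChain (g := Nat.log 2)
      (fun _ _ => log_lt_log_of_heapForest_adj) hl
      fun x hx => mem_heapForest_verts.1 (hmem x hx)
  · rw [List.isChain_map, List.isChain_range]
    intro i hi
    refine ⟨Nat.le_self_pow (Nat.succ_ne_zero i) 2,
      Nat.pow_lt_pow_right one_lt_two (by omega), ?_⟩
    rw [pow_succ, Nat.mul_div_cancel _ two_pos]
  · simp only [List.mem_map, List.mem_range]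
    rintro _ ⟨i, hi, rfl⟩
    rw [mem_heapForest_verts, Nat.log_pow one_lt_two, Finset.mem_Icc]
    omega

theorem neighborCover_heapForest : NeighborCover (Dn n) (heapForest n) heapLabel := by
  rintro m hm ⟨j, c⟩ hadj
  obtain ⟨hm₁, hmj, hjn⟩ : 1 ≤ Nat.log 2 m ∧ Nat.log 2 m < j ∧ j ≤ n := hadj
  have hm₂ : 2 ≤ m := (Finset.mem_Ico.1 hm).1
  obtain ⟨u, hdiv, hu⟩ := exists_heapLabel_eq_of_log_lt (by omega) hmj c
  have hlog : Nat.log 2 u = j := congrArg Prod.fst hu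
  have huV : u ∈ (heapForest n).verts :=
    mem_heapForest_verts.2 (Finset.mem_Icc.2 ⟨by omega, by omega⟩)
  exact Or.inl ⟨u, huV, hu, heapForest_desc_of_div_pow_eq hm₂ (Finset.mem_Ico.1 huV).2 hdiv⟩

theorem isValidDecomp_heapForest : IsValidDecomp (Dn n) (heapForest n) heapLabel := by
  refine ⟨heapForest_isDag, fun m hm => ?_, fun v hv => ?_, neighborCover_heapForest⟩
  · exact mem_verts_Dn.2 (mem_heapForest_verts.1 hm)
  · obtain ⟨i, c⟩ := v
    have hi := mem_verts_Dn.1 hv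
    obtain ⟨u, -, hu⟩ := exists_heapLabel_eq_of_log_lt one_ne_zero (Finset.mem_Icc.1 hi).1 c
    have hlog : Nat.log 2 u = i := congrArg Prod.fst hu
    exact ⟨u, mem_heapForest_verts.2 (hlog ▸ hi), hu⟩

theorem card_heapForest_verts : (heapForest n).verts.card = 2 ^ (n + 1) - 2 :=
  Nat.card_Ico _ _

end HeapForest

end FinDigraph

open FinDigraph in
theorem Dn_has_exponential_optimal_decomp_general (n : ℕ) :
    (Dn n).verts.card = 2 * n ∧ ddp (Dn n) = n ∧
    ∃ (P : FinDigraph ℕ) (org : ℕ → ℕ × Bool),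
      IsValidDecomp (Dn n) P org ∧ depth P = n ∧
      P.verts.card = 2 ^ (n + 1) - 2 :=
  ⟨card_verts_Dn n, ddp_Dn n, heapForest n, heapLabel, isValidDecomp_heapForest,
    depth_heapForest, card_heapForest_verts⟩

open FinDigraph in
/-- For every `n ≥ 1`, the digraph `Dn n` (which has `2 n` vertices and DAG-depth `n`)
admits a valid DAG-depth decomposition of depth `n` — hence an optimal one — with
exactly `2 ^ (n + 1) - 2` vertices; thus optimal valid decompositions can be
exponentially large. -/
theorem Dn_has_exponential_optimal_decomp (n : ℕ) (hn : 1 ≤ n) :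
    (Dn n).verts.card = 2 * n ∧ ddp (Dn n) = n ∧
    ∃ (P : FinDigraph ℕ) (org : ℕ → ℕ × Bool),
      IsValidDecomp (Dn n) P org ∧ depth P = n ∧
      P.verts.card = 2 ^ (n + 1) - 2 :=
  Dn_has_exponential_optimal_decomp_general n
end
end

section
/- Let H be the digraph with vertex set {A, B, C, D, E, F} (six distinct vertices) and edge set {(A,C), (B,C), (C,D), (D,C), (E,D), (F,D)}. Then ddp(H) = 2, yet every valid DAG-depth decomposition (P, org) of H in which org is injective has depth at least 3. (Hence an optimal DAG-depth decomposition cannot always avoid repeating vertices.) -/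
open scoped Classical

noncomputable section

namespace FinDigraph

/-- The digraph `H` with vertices `A = 0, B = 1, C = 2, D = 3, E = 4, F = 5` and
edges `(A,C), (B,C), (C,D), (D,C), (E,D), (F,D)`. -/
def exampleH : FinDigraph ℕ where
  verts := {0, 1, 2, 3, 4, 5}
  Adj u v := (u, v) ∈ ({(0, 2), (1, 2), (2, 3), (3, 2), (4, 3), (5, 3)} : Finset (ℕ × ℕ))
  adj_mem := by
    intro u v h
    fin_cases h <;> simp

end FinDigraph

/-!
Upper bound: the reachable fragments of `H` are the four sets `{X, C, D}` with
`X ∈ {A, B, E, F}`, and each of them falls apart into single vertices once `C` is deleted.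
This is checked by evaluating `ddp` on the edge list of `H`, after identifying `ddp` with a
computable version defined on edge lists.

Lower bound: if `org` is injective and `P` has no path on three vertices, then for every edge
`x → y` of `H` the copies `x'`, `y'` in `P` satisfy `x' → y'`, or `y'` is the unique
in-neighbour of `x'` (because `[u, x']` is a root path for every in-neighbour `u` of `x'`).
On the 2-cycle `C ⇄ D` this forces, say, `c' → d'` with `c'` the only in-neighbour of `d'`.
The edge `E → D` then leaves no room for `e'`: `e' → d'` would give `e' = c'`, and `d' → e'`
would extend `c' → d'` to a path on three vertices. The case `d' → c'` is symmetric, with `A`.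
-/

open Finset Relation

namespace FinDigraph

variable {α β : Type}

theorem subset_iterate_subset {f : Finset α → Finset α} {V T : Finset α}
    (hf : ∀ S ⊆ V, S ⊆ f S ∧ f S ⊆ V) (hT : T ⊆ V) (n : ℕ) : T ⊆ f^[n] T ∧ f^[n] T ⊆ V := by
  induction n with
  | zero => exact ⟨subset_rfl, hT⟩
  | succ n ih =>
    rw [Function.iterate_succ_apply']
    exact ⟨ih.1.trans (hf _ ih.2).1, (hf _ ih.2).2⟩

theorem isFixedPt_iterate_card {f : Finset α → Finset α} {V T : Finset α}
    (hf : ∀ S ⊆ V, S ⊆ f S ∧ f S ⊆ V) (hT : T ⊆ V) :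
    Function.IsFixedPt f (f^[#V] T) := by
  have hV (m : ℕ) : f^[m] T ⊆ V := (subset_iterate_subset hf hT m).2
  have hsub (m : ℕ) : f^[m] T ⊆ f^[m + 1] T := by
    rw [Function.iterate_succ_apply']; exact (hf _ (hV m)).1
  have heq (m : ℕ) (h : #(f^[m] T) = #(f^[m + 1] T)) : f^[m + 1] T = f^[m] T :=
    (eq_of_subset_of_card_le (hsub m) h.ge).symm
  -- the cardinalities increase strictly until the sequence stalls, and are bounded by `#V`
  have hstab : #(f^[#V + 1] T) = #(f^[#V] T) :=
    Nat.stabilises_of_monotone (monotone_nat_of_le_succ fun m => card_le_card (hsub m))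
      (fun m => card_le_card (hV m))
      (fun m h => by rw [Function.iterate_succ_apply' f (m + 1), heq m h,
        ← Function.iterate_succ_apply' f]; exact h) (Nat.le_succ _)
  rw [Function.IsFixedPt, ← Function.iterate_succ_apply' f]
  exact heq _ hstab.symm

section EdgeList

variable [DecidableEq α]

def reachStep (E : Finset (α × α)) (V T : Finset α) : Finset α :=
  T ∪ V.filter fun v => ∃ u ∈ T, (u, v) ∈ E

def reachSetOfEdges (E : Finset (α × α)) (V : Finset α) (s : α) : Finset α :=
  (reachStep E V)^[#V] {s}

def fragmentsOfEdges (E : Finset (α × α)) (V : Finset α) : Finset (Finset α) :=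
  V.powerset.filter fun R => (∃ s ∈ V, R = reachSetOfEdges E V s) ∧
    ∀ s ∈ V, R ⊆ reachSetOfEdges E V s → R = reachSetOfEdges E V s

def inducedEdges (E : Finset (α × α)) (S : Finset α) : Finset (α × α) :=
  E.filter fun p => p.1 ∈ S ∧ p.2 ∈ S

def ddpAuxOfEdges : ℕ → Finset (α × α) → Finset α → ℕ
  | 0, _, _ => 0
  | n + 1, E, V =>
    if hV : #V ≤ 1 then 1
    else if #(fragmentsOfEdges E V) = 1 then
      1 + V.inf' (card_pos.mp (by omega)) fun v =>
        ddpAuxOfEdges n (inducedEdges E (V.erase v)) (V ∩ V.erase v)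
    else
      (fragmentsOfEdges E V).sup fun R => ddpAuxOfEdges n (inducedEdges E R) (V ∩ R)

theorem induce_verts (D : FinDigraph α) (S : Finset α) : (D.induce S).verts = D.verts ∩ S := by
  ext; simp [induce]

theorem deleteVert_eq_induce (D : FinDigraph α) (v : α) :
    D.deleteVert v = D.induce (D.verts.erase v) := by
  rw [deleteVert]; congr 1; ext; simp

variable {D : FinDigraph α} {E : Finset (α × α)}

theorem reachSet_eq_reachSetOfEdges (hE : ∀ u v, D.Adj u v ↔ (u, v) ∈ E) {s : α}
    (hs : s ∈ D.verts) : D.reachSet s = reachSetOfEdges E D.verts s := by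
  have hstep : ∀ S ⊆ D.verts, S ⊆ reachStep E D.verts S ∧ reachStep E D.verts S ⊆ D.verts :=
    fun S hS => ⟨subset_union_left, union_subset hS (filter_subset _ _)⟩
  have hsT : {s} ⊆ D.verts := singleton_subset_iff.mpr hs
  ext v
  simp only [reachSet, mem_filter]
  constructor
  · rintro ⟨-, hsv⟩
    induction hsv with
    | refl => exact (subset_iterate_subset hstep hsT _).1 (mem_singleton_self s)
    | tail _ huv ih =>
      rw [reachSetOfEdges, ← isFixedPt_iterate_card hstep hsT]
      exact mem_union_right _ (mem_filter.mpr ⟨(D.adj_mem _ _ huv).2, _, ih, (hE _ _).mp huv⟩)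
  · suffices ∀ n, ∀ v ∈ (reachStep E D.verts)^[n] {s}, v ∈ D.verts ∧ ReflTransGen D.Adj s v from
      this _ v
    intro n
    induction n with
    | zero => simpa using ⟨hs, ReflTransGen.refl⟩
    | succ n ih =>
      intro v hv
      rw [Function.iterate_succ_apply', reachStep, mem_union, mem_filter] at hv
      rcases hv with hv | ⟨hv, u, hu, huv⟩
      · exact ih v hv
      · exact ⟨hv, (ih u hu).2.tail ((hE u v).mpr huv)⟩

theorem fragments_eq_fragmentsOfEdges (hE : ∀ u v, D.Adj u v ↔ (u, v) ∈ E) :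
    D.fragments = fragmentsOfEdges E D.verts := by
  refine filter_congr fun R _ => ?_
  have hreach : ∀ s ∈ D.verts, D.reachSet s = reachSetOfEdges E D.verts s :=
    fun s hs => reachSet_eq_reachSetOfEdges hE hs
  unfold IsFragment
  constructor
  · rintro ⟨⟨s, hs, hR⟩, hmax⟩
    exact ⟨⟨s, hs, hR.trans (hreach s hs)⟩, fun t ht => hreach t ht ▸ hmax t ht⟩
  · rintro ⟨⟨s, hs, hR⟩, hmax⟩
    exact ⟨⟨s, hs, hR.trans (hreach s hs).symm⟩, fun t ht => (hreach t ht).symm ▸ hmax t ht⟩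

theorem ddpAux_eq_ddpAuxOfEdges (n : ℕ) (D : FinDigraph α) (E : Finset (α × α))
    (hE : ∀ u v, D.Adj u v ↔ (u, v) ∈ E) : ddpAux n D = ddpAuxOfEdges n E D.verts := by
  induction n generalizing D E with
  | zero => rfl
  | succ n ih =>
    have hinduce (S : Finset α) : ∀ u v, (D.induce S).Adj u v ↔ (u, v) ∈ inducedEdges E S :=
      fun u v => by simp only [induce, inducedEdges, mem_filter, hE]
    rw [ddpAux, ddpAuxOfEdges, fragments_eq_fragmentsOfEdges hE]
    split_ifs
    · rfl
    · refine congrArg (1 + ·) (inf'_congr _ rfl fun v _ => ?_)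
      rw [deleteVert_eq_induce, ih _ _ (hinduce _), induce_verts]
    · exact sup_congr rfl fun R _ => by rw [ih _ _ (hinduce R), induce_verts]

end EdgeList

theorem ddp_exampleH : ddp exampleH = 2 := by
  rw [ddp, ddpAux_eq_ddpAuxOfEdges _ _ _ fun _ _ => Iff.rfl]
  decide

section Depth

variable {P : FinDigraph β}

theorem length_le_card_of_isChain (hP : P.IsDag) {l : List β} (hl : l.IsChain P.Adj)
    (hmem : ∀ x ∈ l, x ∈ P.verts) : l.length ≤ #P.verts := by
  have : Std.Irrefl (TransGen P.Adj) := ⟨hP⟩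
  have hnodup : l.Nodup :=
    (List.isChain_iff_pairwise.mp (hl.imp fun _ _ => TransGen.single)).nodup
  rw [← List.toFinset_card_of_nodup hnodup]
  exact card_le_card fun x hx => hmem x (List.mem_toFinset.mp hx)

theorem three_le_depth (hP : P.IsDag) {x y z : β} (hxy : P.Adj x y) (hyz : P.Adj y z) :
    3 ≤ P.depth := by
  refine le_csSup ⟨#P.verts, ?_⟩ ⟨[x, y, z], ?_, ?_, rfl⟩
  · rintro _ ⟨l, hl, hmem, rfl⟩
    exact length_le_card_of_isChain hP hl hmem
  · exact List.isChain_cons_cons.mpr ⟨hxy, List.isChain_pair.mpr hyz⟩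
  · simp [(P.adj_mem x y hxy).1, (P.adj_mem y z hyz).1, (P.adj_mem y z hyz).2]

theorem isRootPath_singleton {v : β} (hv : P.IsRoot v) : P.IsRootPath [v] v :=
  ⟨List.cons_ne_nil _ _, List.isChain_singleton v, by simpa using hv.1, ⟨v, rfl, hv⟩, rfl⟩

theorem isRootPath_pair {u v : β} (hu : P.IsRoot u) (huv : P.Adj u v) :
    P.IsRootPath [u, v] v :=
  ⟨List.cons_ne_nil _ _, List.isChain_pair.mpr huv, by simpa using P.adj_mem u v huv,
    ⟨u, rfl, hu⟩, rfl⟩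

variable (hP2 : ∀ ⦃x y z⦄, P.Adj x y → ¬ P.Adj y z)
include hP2

theorem isRoot_of_adj {u v : β} (huv : P.Adj u v) : P.IsRoot u :=
  ⟨(P.adj_mem u v huv).1, fun _ hwu => hP2 hwu huv⟩

theorem adj_of_desc {x y : β} (hxy : x ≠ y) (h : P.Desc x y) : P.Adj x y := by
  obtain rfl | ⟨m, hxm, hmy⟩ := ReflTransGen.cases_head_iff.mp h
  · exact absurd rfl hxy
  obtain rfl | ⟨_, hmn, -⟩ := ReflTransGen.cases_head_iff.mp hmy
  · exact hxm
  · exact absurd hmn (hP2 hxm)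

theorem adj_or_forall_adj_iff {x y : β} (hx : x ∈ P.verts) (hxy : x ≠ y)
    (h : P.Desc x y ∨ ∀ l, P.IsRootPath l x → y ∈ l) :
    P.Adj x y ∨ ∀ u, P.Adj u x ↔ u = y := by
  refine h.imp (adj_of_desc hP2 hxy) fun h => ?_
  have hin (u : β) (hu : P.Adj u x) : u = y := by
    simpa [hxy.symm, eq_comm] using h _ (isRootPath_pair (isRoot_of_adj hP2 hu) hu)
  obtain ⟨u, hu⟩ : ∃ u, P.Adj u x := by
    by_contra! hroot
    simpa [hxy.symm] using h _ (isRootPath_singleton ⟨hx, hroot⟩)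
  exact fun w => ⟨hin w, fun hw => hw ▸ hin u hu ▸ hu⟩

end Depth

theorem NeighborCover.desc_or_forall_mem_of_injOn {D : FinDigraph α} {P : FinDigraph β}
    {org : β → α} (h : NeighborCover D P org) (hinj : Set.InjOn org P.verts) {x y : β}
    (hx : x ∈ P.verts) (hy : y ∈ P.verts) (hxy : D.Adj (org x) (org y)) :
    P.Desc x y ∨ ∀ l, P.IsRootPath l x → y ∈ l := by
  refine (h x hx _ hxy).imp ?_ fun H l hl => ?_
  · rintro ⟨y', hy', hyy, hdesc⟩
    rwa [← hinj hy' hy hyy]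
  · obtain ⟨y', hy', hyy⟩ := H l hl
    rwa [← hinj (hl.2.2.1 y' hy') hy hyy]

theorem IsValidDecomp.three_le_depth_of_injOn {D : FinDigraph α} {P : FinDigraph β}
    {org : β → α} (hdec : IsValidDecomp D P org) (hinj : Set.InjOn org P.verts) {a c d e : α}
    (hcd : D.Adj c d) (hdc : D.Adj d c) (hac : D.Adj a c) (hed : D.Adj e d)
    (hne_cd : c ≠ d) (hne_ac : a ≠ c) (hne_ad : a ≠ d) (hne_ec : e ≠ c) (hne_ed : e ≠ d) :
    3 ≤ P.depth := by
  obtain ⟨hP, -, hsurj, hcover⟩ := hdec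
  by_contra! hlt
  have hP2 : ∀ ⦃x y z⦄, P.Adj x y → ¬ P.Adj y z :=
    fun _ _ _ hxy hyz => hlt.not_ge (three_le_depth hP hxy hyz)
  have cover {x y : β} (hx : x ∈ P.verts) (hy : y ∈ P.verts) (hxy : D.Adj (org x) (org y))
      (hne : org x ≠ org y) : P.Adj x y ∨ ∀ u, P.Adj u x ↔ u = y :=
    adj_or_forall_adj_iff hP2 hx (ne_of_apply_ne org hne)
      (hcover.desc_or_forall_mem_of_injOn hinj hx hy hxy)
  obtain ⟨c', hc', rfl⟩ := hsurj c (D.adj_mem _ _ hcd).1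
  obtain ⟨d', hd', rfl⟩ := hsurj d (D.adj_mem _ _ hcd).2
  obtain ⟨a', ha', rfl⟩ := hsurj a (D.adj_mem _ _ hac).1
  obtain ⟨e', he', rfl⟩ := hsurj e (D.adj_mem _ _ hed).1
  rcases cover hc' hd' hcd hne_cd with hcd' | hin_c
  · have hin_d := (cover hd' hc' hdc hne_cd.symm).resolve_left (hP2 hcd')
    rcases cover he' hd' hed hne_ed with hed' | hin_e
    · exact hne_ec (congrArg org ((hin_d e').mp hed'))
    · exact hP2 hcd' ((hin_e d').mpr rfl)
  · have hdc' : P.Adj d' c' := (hin_c d').mpr rfl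
    rcases cover ha' hc' hac hne_ac with hac' | hin_a
    · exact hne_ad (congrArg org ((hin_c a').mp hac'))
    · exact hP2 hdc' ((hin_a c').mpr rfl)

end FinDigraph

open FinDigraph in
/-- The digraph `H` has `ddp H = 2`, yet every valid DAG-depth decomposition
`(P, org)` of `H` in which `org` is injective on `V(P)` has depth at least `3`;
hence optimal decompositions cannot always avoid repeating vertices. -/
theorem exampleH_needs_repeats :
    ddp exampleH = 2 ∧
    ∀ (β : Type) (P : FinDigraph β) (org : β → ℕ),
      IsValidDecomp exampleH P org → Set.InjOn org ↑P.verts → 3 ≤ depth P :=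
  ⟨ddp_exampleH, fun _ _ _ hdec hinj =>
    hdec.three_le_depth_of_injOn (a := 0) (c := 2) (d := 3) (e := 4) hinj
      (by simp [exampleH]) (by simp [exampleH]) (by simp [exampleH]) (by simp [exampleH])
      (by decide) (by decide) (by decide) (by decide) (by decide)⟩
end
end

section
/- Let (P, org) be a valid DAG-depth decomposition of a finite digraph D, and define the digraph C with V(C) = V(D) and (u,v) ∈ E(C) if and only if for every u' ∈ V(P) with org(u') = u, either (1) there exists v' ∈ V(P) with org(v') = v such that v' is a descendant of u' in P, or (2) every directed path in P from a root of P to u' contains a vertex w' with org(w') = v. Then E(D) ⊆ E(C) and (P, org) is a valid DAG-depth decomposition of C; that is, C is a partial closure of (P, org). -/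
open scoped Classical

noncomputable section

namespace FinDigraph

/-- The closure candidate of a DAG-depth decomposition `(P, org)` of `D`:
`V(C) = V(D)`, and `(u, v) ∈ E(C)` iff for every copy `u'` of `u` in `P`, either some
copy of `v` is a descendant of `u'`, or every path from a root of `P` to `u'`
contains a copy of `v`. -/
def closureOf {α β : Type} (D : FinDigraph α) (P : FinDigraph β) (org : β → α) :
    FinDigraph α where
  verts := D.verts
  Adj u v := u ∈ D.verts ∧ v ∈ D.verts ∧
    ∀ u' ∈ P.verts, org u' = u →
      ((∃ v' ∈ P.verts, org v' = v ∧ P.Desc u' v') ∨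
       (∀ l, P.IsRootPath l u' → ∃ w' ∈ l, org w' = v))
  adj_mem := fun _ _ h => ⟨h.1, h.2.1⟩

end FinDigraph

namespace FinDigraph

variable {α β : Type} {D : FinDigraph α} {P : FinDigraph β} {org : β → α}

theorem closureOf_adj_of_adj (hcov : NeighborCover D P org) {u v : α} (huv : D.Adj u v) :
    (closureOf D P org).Adj u v :=
  ⟨(D.adj_mem u v huv).1, (D.adj_mem u v huv).2,
    fun u' hu' horg => hcov u' hu' v (horg ▸ huv)⟩

theorem neighborCover_closureOf : NeighborCover (closureOf D P org) P org :=
  fun v' hv' _ hadj => hadj.2.2 v' hv' rfl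

end FinDigraph

open FinDigraph in
/-- For a valid DAG-depth decomposition `(P, org)` of `D`, the digraph `C = closureOf D P org`
satisfies `E(D) ⊆ E(C)` and `(P, org)` is still a valid DAG-depth decomposition of `C`;
that is, `C` is a partial closure of `(P, org)`. -/
theorem closureOf_is_partial_closure {α β : Type} (D : FinDigraph α)
    (P : FinDigraph β) (org : β → α) (h : IsValidDecomp D P org) :
    (∀ u v, D.Adj u v → (closureOf D P org).Adj u v) ∧
    IsValidDecomp (closureOf D P org) P org := by
  obtain ⟨hdag, hmem, hsurj, hcov⟩ := h
  exact ⟨fun _ _ => closureOf_adj_of_adj hcov, hdag, hmem, hsurj, neighborCover_closureOf⟩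
end
end

section
/- Let (P, org) be a valid DAG-depth decomposition of a finite digraph D, and let C be the digraph with V(C) = V(D) and (u,v) ∈ E(C) if and only if for every u' ∈ V(P) with org(u') = u, either (1) there exists v' ∈ V(P) with org(v') = v such that v' is a descendant of u' in P, or (2) every directed path in P from a root of P to u' contains a vertex w' with org(w') = v. Then for every digraph C' with V(C') = V(D), the pair (P, org) is a valid DAG-depth decomposition of C' if and only if E(C') ⊆ E(C). Consequently, C is the unique closure of (P, org). -/
open scoped Classical

noncomputable section

/-! Validity of `(P, org)` for a digraph on `V(D)` depends on the digraph only through the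
Neighbor cover condition, and the Neighbor cover condition for a single edge `(u, v)`, quantified
over all copies of `u` in `P`, is exactly the defining condition of an edge of `closureOf D P org`. -/

namespace FinDigraph

variable {α β : Type} {D C : FinDigraph α} {P : FinDigraph β} {org : β → α}

theorem isValidDecomp_iff_neighborCover_of_verts_eq (h : IsValidDecomp D P org)
    (hV : C.verts = D.verts) : IsValidDecomp C P org ↔ NeighborCover C P org := by
  obtain ⟨hdag, hmem, hsurj, -⟩ := h
  exact ⟨fun hC => hC.2.2.2, fun hC => ⟨hdag, hV ▸ hmem, hV ▸ hsurj, hC⟩⟩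

theorem neighborCover_iff_adj_closureOf (hV : C.verts = D.verts) :
    NeighborCover C P org ↔ ∀ u v, C.Adj u v → (closureOf D P org).Adj u v := by
  refine ⟨fun hC u v huv => ?_, fun hC v' hv' u hu => (hC _ _ hu).2.2 v' hv' rfl⟩
  obtain ⟨hu, hv⟩ := hV ▸ C.adj_mem u v huv
  exact ⟨hu, hv, fun u' hu' horg => hC u' hu' v (horg ▸ huv)⟩

end FinDigraph

open FinDigraph in
/-- For a valid DAG-depth decomposition `(P, org)` of `D`, and `C = closureOf D P org`:
a digraph `C'` with `V(C') = V(D)` admits `(P, org)` as a valid DAG-depth decomposition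
iff `E(C') ⊆ E(C)`.  Consequently `C` is the unique closure of `(P, org)`. -/
theorem closureOf_is_closure {α β : Type} (D : FinDigraph α)
    (P : FinDigraph β) (org : β → α) (h : IsValidDecomp D P org) :
    ∀ C' : FinDigraph α, C'.verts = D.verts →
      (IsValidDecomp C' P org ↔ ∀ u v, C'.Adj u v → (closureOf D P org).Adj u v) :=
  fun _ hV => (isValidDecomp_iff_neighborCover_of_verts_eq h hV).trans
    (neighborCover_iff_adj_closureOf hV)
end
end
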